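/- arXiv:1703.04266 — 2 statements merged into one kernel-verified Lean document; each statement's English description precedes it below -/
import Mathlib

section
/- Let q : D2 → D1 and p : D1 → D0 be Verdier quotient functors between triangulated categories, and let r : D0 → D2 be a right adjoint functor to the composition p ∘ q : D2 → D0. Then the composition q ∘ r : D0 → D1 is a right adjoint functor to p : D1 → D0. -/
/-!
STATEMENT 10: Let `q : D₂ → D₁` and `p : D₁ → D₀` be Verdier quotient functors between
triangulated categories, and let `r : D₀ → D₂` be a right adjoint to the composition
`p ∘ q : D₂ → D₀`. Then `q ∘ r : D₀ → D₁` is a right adjoint to `p : D₁ → D₀`.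

A Verdier quotient functor is a triangulated functor which is a localization functor at
the class of morphisms whose cone lies in its kernel.
-/

open CategoryTheory Limits Pretriangulated

/-- The class of morphisms of a pretriangulated category whose cone is annihilated
by a functor `F`. -/
def verdierW {C : Type*} [Category C] {D : Type*} [Category D]
    [HasZeroObject C] [Preadditive C] [HasShift C ℤ]
    [∀ n : ℤ, (shiftFunctor C n).Additive] [Pretriangulated C]
    (F : C ⥤ D) : MorphismProperty C := fun X _Y f =>
  ∃ (Z : C) (g : _Y ⟶ Z) (h : Z ⟶ X⟦(1 : ℤ)⟧),
    (Triangle.mk f g h ∈ distTriang C) ∧ IsZero (F.obj Z)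

/-- A functor between pretriangulated categories is a Verdier quotient functor if it
exhibits its target as the localization of its source at the class of morphisms whose
cone lies in its kernel. -/
def IsVerdierQuotient {C : Type*} [Category C] {D : Type*} [Category D]
    [HasZeroObject C] [Preadditive C] [HasShift C ℤ]
    [∀ n : ℤ, (shiftFunctor C n).Additive] [Pretriangulated C]
    (F : C ⥤ D) : Prop :=
  F.IsLocalization (verdierW F)

theorem stmt10
    {D₀ : Type*} [Category D₀] [HasZeroObject D₀] [Preadditive D₀] [HasShift D₀ ℤ]
    [∀ n : ℤ, (shiftFunctor D₀ n).Additive] [Pretriangulated D₀] [IsTriangulated D₀]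
    {D₁ : Type*} [Category D₁] [HasZeroObject D₁] [Preadditive D₁] [HasShift D₁ ℤ]
    [∀ n : ℤ, (shiftFunctor D₁ n).Additive] [Pretriangulated D₁] [IsTriangulated D₁]
    {D₂ : Type*} [Category D₂] [HasZeroObject D₂] [Preadditive D₂] [HasShift D₂ ℤ]
    [∀ n : ℤ, (shiftFunctor D₂ n).Additive] [Pretriangulated D₂] [IsTriangulated D₂]
    (q : D₂ ⥤ D₁) [q.CommShift ℤ] [q.IsTriangulated]
    (p : D₁ ⥤ D₀) [p.CommShift ℤ] [p.IsTriangulated]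
    (r : D₀ ⥤ D₂) [r.CommShift ℤ] [r.IsTriangulated]
    (hq : IsVerdierQuotient q) (hp : IsVerdierQuotient p)
    (adj : q ⋙ p ⊣ r) :
    Nonempty (p ⊣ r ⋙ q) := by
  
  haveI : q.IsLocalization (verdierW q) := hq
  set W := verdierW q with hW
  -- the natural transformation q ⟶ q ⋙ (p ⋙ (r ⋙ q)) coming from adj.unit
  let τ : q ⟶ q ⋙ (p ⋙ (r ⋙ q)) :=
    { app := fun X => q.map (adj.unit.app X)
      naturality := fun X Y f => by
        dsimp
        rw [← q.map_comp, ← q.map_comp]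
        exact congrArg q.map (adj.unit.naturality f) }
  let unit : 𝟭 D₁ ⟶ p ⋙ (r ⋙ q) :=
    Localization.liftNatTrans q W q (q ⋙ (p ⋙ (r ⋙ q))) (𝟭 D₁) (p ⋙ (r ⋙ q)) τ
  let counit : (r ⋙ q) ⋙ p ⟶ 𝟭 D₀ :=
    { app := fun Y => adj.counit.app Y
      naturality := fun X Y f => adj.counit.naturality f }
  have hunit : ∀ X : D₂, unit.app (q.obj X) = q.map (adj.unit.app X) := by
    intro X
    have h := Localization.liftNatTrans_app q W q (q ⋙ (p ⋙ (r ⋙ q))) (𝟭 D₁)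
      (p ⋙ (r ⋙ q)) τ X
    rw [show Localization.Lifting.iso q W q (𝟭 D₁) = q.rightUnitor from rfl] at h
    simpa [unit, τ] using h
  -- left triangle, as an equality of natural transformations p ⟶ p
  have hleft : ∀ X : D₁, p.map (unit.app X) ≫ counit.app (p.obj X) = 𝟙 (p.obj X) := by
    let α : p ⟶ p :=
      { app := fun X => p.map (unit.app X) ≫ counit.app (p.obj X)
        naturality := fun X Y f => by
          dsimp [counit]
          rw [← p.map_comp_assoc, show f ≫ unit.app Y = unit.app X ≫ (p ⋙ (r ⋙ q)).map f
            from unit.naturality f]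
          dsimp
          rw [p.map_comp_assoc]
          rw [show p.map (q.map (r.map (p.map f))) ≫ adj.counit.app (p.obj Y) =
            adj.counit.app (p.obj X) ≫ p.map f from adj.counit.naturality (p.map f), Category.assoc] }
    have : α = 𝟙 p := by
      apply Localization.natTrans_ext q W
      intro X
      dsimp [α, counit]
      rw [hunit]
      exact adj.left_triangle_components X
    intro X
    exact congrArg (fun (t : p ⟶ p) => t.app X) this
  exact ⟨{
    unit := unit
    counit := counit
    left_triangle_components := hleft
    right_triangle_components := fun Y => by
      dsimp [counit]
      rw [hunit (r.obj Y)]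
      rw [← q.map_comp]
      have h2 := adj.right_triangle_components Y
      dsimp at h2
      rw [h2]
      exact q.map_id _ }⟩
end

section
/- Suppose given triangulated categories D1, D2, D̄1, D̄2, Verdier quotient functors π1 : D1 → D̄1 and π2 : D2 → D̄2, and triangulated functors G : D1 → D2, F : D2 → D1, Ḡ : D̄1 → D̄2, F̄ : D̄2 → D̄1 together with natural isomorphisms π2 ∘ G ≅ Ḡ ∘ π1 and π1 ∘ F ≅ F̄ ∘ π2. If F is left adjoint to G, then F̄ is naturally left adjoint to Ḡ. -/
/-!
STATEMENT 11: Suppose given triangulated categories `D₁, D₂, D̄₁, D̄₂`, Verdier quotient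
functors `π₁ : D₁ → D̄₁` and `π₂ : D₂ → D̄₂`, and triangulated functors `G : D₁ → D₂`,
`F : D₂ → D₁`, `Ḡ : D̄₁ → D̄₂`, `F̄ : D̄₂ → D̄₁` together with natural isomorphisms
`π₂ ∘ G ≅ Ḡ ∘ π₁` and `π₁ ∘ F ≅ F̄ ∘ π₂`. If `F` is left adjoint to `G`, then `F̄` is
naturally left adjoint to `Ḡ`.
-/

open CategoryTheory Limits Pretriangulated

theorem stmt11
    {D₁ : Type*} [Category D₁] [HasZeroObject D₁] [Preadditive D₁] [HasShift D₁ ℤ]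
    [∀ n : ℤ, (shiftFunctor D₁ n).Additive] [Pretriangulated D₁] [IsTriangulated D₁]
    {D₂ : Type*} [Category D₂] [HasZeroObject D₂] [Preadditive D₂] [HasShift D₂ ℤ]
    [∀ n : ℤ, (shiftFunctor D₂ n).Additive] [Pretriangulated D₂] [IsTriangulated D₂]
    {D₁' : Type*} [Category D₁'] [HasZeroObject D₁'] [Preadditive D₁'] [HasShift D₁' ℤ]
    [∀ n : ℤ, (shiftFunctor D₁' n).Additive] [Pretriangulated D₁'] [IsTriangulated D₁']
    {D₂' : Type*} [Category D₂'] [HasZeroObject D₂'] [Preadditive D₂'] [HasShift D₂' ℤ]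
    [∀ n : ℤ, (shiftFunctor D₂' n).Additive] [Pretriangulated D₂'] [IsTriangulated D₂']
    (π₁ : D₁ ⥤ D₁') [π₁.CommShift ℤ] [π₁.IsTriangulated]
    (π₂ : D₂ ⥤ D₂') [π₂.CommShift ℤ] [π₂.IsTriangulated]
    (G : D₁ ⥤ D₂) [G.CommShift ℤ] [G.IsTriangulated]
    (F : D₂ ⥤ D₁) [F.CommShift ℤ] [F.IsTriangulated]
    (G' : D₁' ⥤ D₂') [G'.CommShift ℤ] [G'.IsTriangulated]
    (F' : D₂' ⥤ D₁') [F'.CommShift ℤ] [F'.IsTriangulated]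
    (hπ₁ : IsVerdierQuotient π₁) (hπ₂ : IsVerdierQuotient π₂)
    (eG : G ⋙ π₂ ≅ π₁ ⋙ G') (eF : F ⋙ π₁ ≅ π₂ ⋙ F')
    (adj : F ⊣ G) :
    Nonempty (F' ⊣ G') := by
  haveI : π₁.IsLocalization (verdierW π₁) := hπ₁
  haveI : π₂.IsLocalization (verdierW π₂) := hπ₂
  letI : CatCommSq F π₂ π₁ F' := ⟨eF⟩
  letI : CatCommSq G π₁ π₂ G' := ⟨eG⟩
  exact ⟨adj.localization π₂ (verdierW π₂) π₁ (verdierW π₁) F' G'⟩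
end
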